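/- Suppose the integer k ≥ 0 satisfies ν := k − n/2 + 1 > 0. Then for every z > 0 the consecutive-generation ratio satisfies the strict bound γ_k(z) < 2(k+1)/(Bz); equivalently, B · z · 𝒜_k(z) < 2(k+1) · 𝒜_{k+1}(z). -/

import Mathlib

open Real MeasureTheory Set Filter Topology

/-- The steady-state generation-`k` density in the normalized distance
`z = |x|√(λ/D)` from the origin:
`𝒜_k(z) = (μ(λB)^k/(k!(4πD)^{n/2})) ∫₀^∞ s^{k−n/2} exp(−λs − z²/(4λs)) ds`. -/
noncomputable def steadyDensity (n : ℕ) (lam D B mu : ℝ) (k : ℕ) (z : ℝ) : ℝ :=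
  (mu * (lam * B) ^ k / ((Nat.factorial k : ℝ) * (4 * π * D) ^ ((n : ℝ) / 2))) *
    ∫ s in Set.Ioi (0:ℝ),
      s ^ ((k : ℝ) - (n : ℝ) / 2) * Real.exp (-lam * s - z ^ 2 / (4 * lam * s))

/-- The consecutive-generation ratio `γ_k(z) = 𝒜_k(z)/𝒜_{k+1}(z)`. -/
noncomputable def genRatio (n : ℕ) (lam D B mu : ℝ) (k : ℕ) (z : ℝ) : ℝ :=
  steadyDensity n lam D B mu k z / steadyDensity n lam D B mu (k + 1) z

/-!
Write `I(b) = ∫₀^∞ s^b e^{-λs - w/s} ds` with `w = z²/(4λ)`, so that `𝒜_k ∝ I(k - n/2)` and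
the claim is `z I(a) < 2λ I(a+1)` for `a = ν - 1 > -1`. Integrating `d/ds [s^{a+1} e^{-λs - w/s}]`
over `(0, ∞)` gives `λ I(a+1) = (a+1) I(a) + w I(a-1)`, while `λs² - zs + w = λ(s - z/(2λ))² ≥ 0`
gives `z I(a) ≤ λ I(a+1) + w I(a-1)`. Adding the two, `2λ I(a+1) ≥ (z + a + 1) I(a) > z I(a)`.
-/

open scoped Nat

lemma exp_neg_div_le_factorial_mul_pow (m : ℕ) {w s : ℝ} (hw : 0 < w) (hs : 0 < s) :
    exp (-(w / s)) ≤ m ! / w ^ m * s ^ m := by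
  rw [exp_neg, inv_le_comm₀ (exp_pos _) (by positivity)]
  calc (m ! / w ^ m * s ^ m)⁻¹ = (w / s) ^ m / m ! := by rw [div_pow]; field_simp
    _ ≤ exp (w / s) := pow_div_factorial_le_exp _ (by positivity) m

/-- Equals `2 (w/λ)^((b+1)/2) K_{b+1}(2√(λw))`, with `K` the modified Bessel function of the
second kind. -/
noncomputable def besselKIntegral (lam w b : ℝ) : ℝ :=
  ∫ s in Ioi (0 : ℝ), s ^ b * exp (-lam * s - w / s)

section
variable {lam w : ℝ}

lemma integrableOn_rpow_mul_exp_neg_mul_sub_div (b : ℝ) (hlam : 0 < lam) (hw : 0 < w) :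
    IntegrableOn (fun s : ℝ => s ^ b * exp (-lam * s - w / s)) (Ioi 0) := by
  obtain ⟨m, hm⟩ := exists_nat_gt (-b)
  have hdom :
      IntegrableOn (fun s : ℝ => m ! / w ^ m * (s ^ (b + m) * exp (-lam * s))) (Ioi 0) := by
    have :=
      integrableOn_rpow_mul_exp_neg_mul_rpow (s := b + m) (p := 1) (by linarith) one_pos hlam
    simp only [rpow_one] at this
    exact this.const_mul _
  refine hdom.mono' ?_ ((ae_restrict_iff' measurableSet_Ioi).mpr (ae_of_all _ fun s hs => ?_))
  · refine ContinuousOn.aestronglyMeasurable (fun s hs => ?_) measurableSet_Ioi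
    have hs : s ≠ 0 := (mem_Ioi.mp hs).ne'
    exact ContinuousAt.continuousWithinAt (by fun_prop (disch := simp [hs]))
  · have hs : 0 < s := hs
    rw [norm_of_nonneg (by positivity), rpow_add hs, rpow_natCast, sub_eq_add_neg, exp_add]
    have := exp_neg_div_le_factorial_mul_pow m hw hs
    calc s ^ b * (exp (-lam * s) * exp (-(w / s)))
        ≤ s ^ b * (exp (-lam * s) * (m ! / w ^ m * s ^ m)) := by gcongr
      _ = _ := by ring

lemma besselKIntegral_pos (b : ℝ) (hlam : 0 < lam) (hw : 0 < w) :
    0 < besselKIntegral lam w b := by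
  have hpos : ∀ s ∈ Ioi (0 : ℝ), 0 < s ^ b * exp (-lam * s - w / s) :=
    fun s (hs : 0 < s) => by positivity
  have hsupp : Function.support (fun s : ℝ => s ^ b * exp (-lam * s - w / s)) ∩ Ioi 0 = Ioi 0 :=
    inter_eq_right.mpr fun s hs => (hpos s hs).ne'
  rw [besselKIntegral, setIntegral_pos_iff_support_of_nonneg_ae
      ((ae_restrict_iff' measurableSet_Ioi).mpr (ae_of_all _ fun s hs => (hpos s hs).le))
      (integrableOn_rpow_mul_exp_neg_mul_sub_div b hlam hw), hsupp, volume_Ioi]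
  exact ENNReal.zero_lt_top

lemma hasDerivAt_rpow_mul_exp_neg_mul_sub_div (b : ℝ) {s : ℝ} (hs : 0 < s) :
    HasDerivAt (fun s : ℝ => s ^ (b + 1) * exp (-lam * s - w / s))
      ((b + 1) * (s ^ b * exp (-lam * s - w / s)) - lam * (s ^ (b + 1) * exp (-lam * s - w / s))
        + w * (s ^ (b - 1) * exp (-lam * s - w / s))) s := by
  have hexponent : HasDerivAt (fun s : ℝ => -lam * s - w / s) (-lam + w / s ^ 2) s := by
    refine (((hasDerivAt_id s).const_mul (-lam)).sub
      ((hasDerivAt_inv hs.ne').const_mul w)).congr_deriv ?_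
    field_simp
    ring
  refine ((hasDerivAt_rpow_const (p := b + 1) (Or.inl hs.ne')).mul
    ((hasDerivAt_exp _).comp s hexponent)).congr_deriv ?_
  rw [Function.comp_apply, add_sub_cancel_right, rpow_add_one hs.ne', rpow_sub_one hs.ne']
  field_simp
  ring

lemma besselKIntegral_recurrence {b : ℝ} (hb : 0 < b + 1) (hlam : 0 < lam) (hw : 0 < w) :
    lam * besselKIntegral lam w (b + 1) =
      (b + 1) * besselKIntegral lam w b + w * besselKIntegral lam w (b - 1) := by
  set f : ℝ → ℝ := fun s => s ^ (b + 1) * exp (-lam * s - w / s)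
  have hf0 : f 0 = 0 := by simp [f, zero_rpow hb.ne']
  have hbound : ∀ s, 0 ≤ s → 0 ≤ f s ∧ f s ≤ s ^ (b + 1) := fun s hs => by
    refine ⟨by positivity, mul_le_of_le_one_right (by positivity) (exp_le_one_iff.mpr ?_)⟩
    have : 0 ≤ lam * s := by positivity
    have : 0 ≤ w / s := by positivity
    linarith [neg_mul lam s]
  have hzero : ContinuousWithinAt f (Ici 0) 0 := by
    have hpow : Tendsto (fun s : ℝ => s ^ (b + 1)) (𝓝[≥] 0) (𝓝 0) := by
      simpa [zero_rpow hb.ne'] using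
        (continuousAt_rpow_const 0 (b + 1) (Or.inr hb.le)).tendsto.mono_left nhdsWithin_le_nhds
    rw [ContinuousWithinAt, hf0]
    refine tendsto_of_tendsto_of_tendsto_of_le_of_le' tendsto_const_nhds hpow ?_ ?_ <;>
      filter_upwards [self_mem_nhdsWithin] with s hs
    exacts [(hbound s hs).1, (hbound s hs).2]
  have hinfty : Tendsto f atTop (𝓝 0) := by
    refine tendsto_of_tendsto_of_tendsto_of_le_of_le' tendsto_const_nhds
      (tendsto_rpow_mul_exp_neg_mul_atTop_nhds_zero (b + 1) lam hlam) ?_ ?_ <;>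
      filter_upwards [eventually_gt_atTop 0] with s hs
    · exact (hbound s hs.le).1
    · have : 0 ≤ w / s := by positivity
      exact mul_le_mul_of_nonneg_left (exp_le_exp.mpr (by linarith)) (by positivity)
  have hint := fun c => integrableOn_rpow_mul_exp_neg_mul_sub_div c hlam hw
  have hmid := (hint b).const_mul (b + 1)
  have hup := (hint (b + 1)).const_mul lam
  have hdown := (hint (b - 1)).const_mul w
  have hftc := integral_Ioi_of_hasDerivAt_of_tendsto hzero
    (fun s hs => hasDerivAt_rpow_mul_exp_neg_mul_sub_div b hs) ((hmid.sub' hup).add hdown) hinfty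
  rw [integral_add (hmid.sub' hup) hdown, integral_sub hmid hup, integral_const_mul,
    integral_const_mul, integral_const_mul, hf0] at hftc
  simp only [besselKIntegral]
  linarith

lemma mul_besselKIntegral_le_of_sq_le {z : ℝ} (b : ℝ) (hlam : 0 < lam) (hw : 0 < w)
    (hz : z ^ 2 ≤ 4 * lam * w) :
    z * besselKIntegral lam w b ≤
      lam * besselKIntegral lam w (b + 1) + w * besselKIntegral lam w (b - 1) := by
  have hint := fun c => integrableOn_rpow_mul_exp_neg_mul_sub_div c hlam hw
  have hup := (hint (b + 1)).const_mul lam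
  have hmid := (hint b).const_mul z
  have hdown := (hint (b - 1)).const_mul w
  have hnonneg : 0 ≤ ∫ s in Ioi (0 : ℝ), lam * (s ^ (b + 1) * exp (-lam * s - w / s))
      - z * (s ^ b * exp (-lam * s - w / s)) + w * (s ^ (b - 1) * exp (-lam * s - w / s)) := by
    refine setIntegral_nonneg measurableSet_Ioi fun s (hs : 0 < s) => ?_
    have hquad : 0 ≤ lam * s ^ 2 - z * s + w := by
      have : 0 ≤ 4 * lam * (lam * s ^ 2 - z * s + w) := by
        nlinarith [sq_nonneg (2 * lam * s - z)]
      exact (mul_nonneg_iff_of_pos_left (by positivity)).mp this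
    calc (0 : ℝ) ≤ s ^ b * exp (-lam * s - w / s) * ((lam * s ^ 2 - z * s + w) / s) := by
          positivity
      _ = _ := by rw [rpow_add_one hs.ne', rpow_sub_one hs.ne']; field_simp
  rw [integral_add (hup.sub' hmid) hdown, integral_sub hup hmid, integral_const_mul,
    integral_const_mul, integral_const_mul] at hnonneg
  simp only [besselKIntegral]
  linarith

lemma mul_besselKIntegral_lt_of_sq_le {b z : ℝ} (hb : 0 < b + 1) (hlam : 0 < lam) (hw : 0 < w)
    (hz : z ^ 2 ≤ 4 * lam * w) :
    z * besselKIntegral lam w b < 2 * lam * besselKIntegral lam w (b + 1) := by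
  linarith [besselKIntegral_recurrence hb hlam hw, mul_besselKIntegral_le_of_sq_le b hlam hw hz,
    mul_pos hb (besselKIntegral_pos b hlam hw)]

end

lemma steadyDensity_eq_mul_besselKIntegral (n : ℕ) (lam D B mu : ℝ) (k : ℕ) (z : ℝ) :
    steadyDensity n lam D B mu k z = mu * (lam * B) ^ k / (k ! * (4 * π * D) ^ ((n : ℝ) / 2)) *
      besselKIntegral lam (z ^ 2 / (4 * lam)) (k - n / 2) := by
  simp only [steadyDensity, besselKIntegral, div_div]

lemma succ_mul_steadyDensity_succ (n : ℕ) (lam D B mu : ℝ) (k : ℕ) (z : ℝ) :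
    ((k : ℝ) + 1) * steadyDensity n lam D B mu (k + 1) z =
      lam * B * (mu * (lam * B) ^ k / (k ! * (4 * π * D) ^ ((n : ℝ) / 2))) *
        besselKIntegral lam (z ^ 2 / (4 * lam)) (k - n / 2 + 1) := by
  rw [steadyDensity_eq_mul_besselKIntegral, Nat.factorial_succ, pow_succ]
  push_cast
  rw [show (k : ℝ) + 1 - n / 2 = k - n / 2 + 1 by ring]
  generalize besselKIntegral _ _ _ = J
  field_simp

theorem genRatio_strict_bound_general
    (n : ℕ) (lam D B mu : ℝ)
    (hlam : 0 < lam) (hD : 0 < D) (hB : 0 < B) (hmu : 0 < mu)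
    (k : ℕ) (hnu : 0 < (k : ℝ) - (n : ℝ) / 2 + 1) (z : ℝ) (hz : 0 < z) :
    genRatio n lam D B mu k z < 2 * ((k : ℝ) + 1) / (B * z) ∧
    B * z * steadyDensity n lam D B mu k z <
      2 * ((k : ℝ) + 1) * steadyDensity n lam D B mu (k + 1) z := by
  have hw : 0 < z ^ 2 / (4 * lam) := by positivity
  have hkey := mul_besselKIntegral_lt_of_sq_le (z := z) hnu hlam hw (le_of_eq (by field_simp))
  have hcurrent := steadyDensity_eq_mul_besselKIntegral n lam D B mu k z
  have hnext := succ_mul_steadyDensity_succ n lam D B mu k z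
  set I := besselKIntegral lam (z ^ 2 / (4 * lam))
  set C := mu * (lam * B) ^ k / (k ! * (4 * π * D) ^ ((n : ℝ) / 2))
  have hC : 0 < C := by positivity
  have hbound : B * z * steadyDensity n lam D B mu k z <
      2 * ((k : ℝ) + 1) * steadyDensity n lam D B mu (k + 1) z := by
    calc B * z * steadyDensity n lam D B mu k z = B * C * (z * I (k - n / 2)) := by
          rw [hcurrent]; ring
      _ < B * C * (2 * lam * I (k - n / 2 + 1)) := by gcongr
      _ = 2 * ((k : ℝ) + 1) * steadyDensity n lam D B mu (k + 1) z := by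
          linear_combination (-2) * hnext
  refine ⟨?_, hbound⟩
  have hnext_pos : 0 < steadyDensity n lam D B mu (k + 1) z := by
    have hI : 0 < I (k - n / 2 + 1) := besselKIntegral_pos _ hlam hw
    refine pos_of_mul_pos_right (a := (k : ℝ) + 1) ?_ (by positivity)
    rw [hnext]
    positivity
  rw [genRatio, div_lt_div_iff₀ hnext_pos (by positivity)]
  linarith

/-- If `ν = k − n/2 + 1 > 0`, then for every `z > 0`:
`γ_k(z) < 2(k+1)/(Bz)`; equivalently `B z 𝒜_k(z) < 2(k+1) 𝒜_{k+1}(z)`. -/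
theorem genRatio_strict_bound
    (n : ℕ) (hn : 1 ≤ n) (lam D B mu : ℝ)
    (hlam : 0 < lam) (hD : 0 < D) (hB : 0 < B) (hmu : 0 < mu)
    (k : ℕ) (hnu : 0 < (k : ℝ) - (n : ℝ) / 2 + 1) (z : ℝ) (hz : 0 < z) :
    genRatio n lam D B mu k z < 2 * ((k : ℝ) + 1) / (B * z) ∧
    B * z * steadyDensity n lam D B mu k z <
      2 * ((k : ℝ) + 1) * steadyDensity n lam D B mu (k + 1) z :=
  genRatio_strict_bound_general n lam D B mu hlam hD hB hmu k hnu z hz
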